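/- arXiv:2411.09040 — 4 statements merged into one kernel-verified Lean document; each statement's English description precedes it below -/
import Mathlib

section
/- (Euler's theorem for the q-exponential E_q) For complex z and q with |q| < 1: ∑_{k=0}^∞ q^{C(k,2)} z^k / (q;q)_k = (−z; q)_∞. -/
/-!
Write `E(z) = ∑ₖ q^C(k,2) zᵏ / (q;q)ₖ`. Comparing coefficients gives the functional equation
`E(z) = (1 + z) E(qz)`; iterating it, `E(z) = ∏_{n<N} (1 + z qⁿ) · E(qᴺ z)`. As `N → ∞` the
partial products converge to `(-z;q)_∞`, while `E(qᴺ z) → E(0) = 1` by dominated convergence,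
since the `k`-th term of `E(qᴺ z)` is that of `E(z)` scaled by `q^{Nk}`.
-/

open Filter Finset Topology

section NormedRing

variable {α : Type*} [SeminormedRing α]

theorem summable_norm_of_succ_eq_mul_of_tendsto_zero {f r : ℕ → α}
    (hf : ∀ k, f (k + 1) = f k * r k) (hr : Tendsto r atTop (𝓝 0)) :
    Summable (fun k ↦ ‖f k‖) := by
  refine summable_of_ratio_norm_eventually_le (r := 1 / 2) (by norm_num) ?_
  filter_upwards [(tendsto_norm_zero.comp hr).eventually_le_const (by norm_num : (0 : ℝ) < 1 / 2)]
    with k hk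
  rw [norm_norm, norm_norm, hf, mul_comm (1 / 2 : ℝ)]
  exact (norm_mul_le _ _).trans (mul_le_mul_of_nonneg_left hk (norm_nonneg _))

end NormedRing

namespace QExp

variable {𝕜 : Type*} [NormedField 𝕜] {q : 𝕜}

/-- `(q;q)ₖ`. -/
def qPochhammer (q : 𝕜) (k : ℕ) : 𝕜 := ∏ j ∈ range k, (1 - q * q ^ j)

def term (q z : 𝕜) (k : ℕ) : 𝕜 := q ^ k.choose 2 * z ^ k / qPochhammer q k

/-- Euler's series `E_q(z)`. -/
noncomputable def series (q z : 𝕜) : 𝕜 := ∑' k, term q z k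

theorem one_sub_mul_pow_ne_zero (hq : ‖q‖ < 1) (j : ℕ) : 1 - q * q ^ j ≠ 0 := by
  rw [sub_ne_zero, ← pow_succ']
  intro h
  have := congrArg norm h
  rw [norm_one, norm_pow] at this
  exact (pow_lt_one₀ (norm_nonneg q) hq j.succ_ne_zero).ne' this

theorem term_zero (q z : 𝕜) : term q z 0 = 1 := by simp [term, qPochhammer]

theorem term_succ (q z : 𝕜) (k : ℕ) :
    term q z (k + 1) = term q z k * (q ^ k * z / (1 - q * q ^ k)) := by
  rw [term, term, qPochhammer, prod_range_succ, ← qPochhammer, Nat.choose_succ_succ,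
    Nat.choose_one_right, pow_add, ← mul_div_mul_comm]
  ring

theorem term_mul_left (q c z : 𝕜) (k : ℕ) : term q (c * z) k = c ^ k * term q z k := by
  simp only [term, mul_pow]
  ring

theorem term_succ_eq_add (hq : ‖q‖ < 1) (w : 𝕜) (k : ℕ) :
    term q w (k + 1) = term q (q * w) (k + 1) + w * term q (q * w) k := by
  have hk := one_sub_mul_pow_ne_zero hq k
  -- the two summands are `q ^ (k + 1)` and `1 - q ^ (k + 1)` times the left side
  rw [term_mul_left, term_mul_left, term_succ, div_eq_mul_inv]
  linear_combination (term q w k * q ^ k * w) * mul_inv_cancel₀ hk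

theorem tendsto_term_ratio (hq : ‖q‖ < 1) (z : 𝕜) :
    Tendsto (fun k ↦ q ^ k * z / (1 - q * q ^ k)) atTop (𝓝 0) := by
  have hpow := tendsto_pow_atTop_nhds_zero_of_norm_lt_one hq
  convert (hpow.mul_const z).div ((tendsto_const_nhds (x := 1)).sub (hpow.const_mul q))
    (by simp) using 2 <;> simp

theorem summable_norm_term (hq : ‖q‖ < 1) (z : 𝕜) : Summable (fun k ↦ ‖term q z k‖) :=
  summable_norm_of_succ_eq_mul_of_tendsto_zero (term_succ q z) (tendsto_term_ratio hq z)

theorem series_zero (q : 𝕜) : series q 0 = 1 := by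
  rw [series, tsum_eq_single 0 fun k hk ↦ by simp [term, hk], term_zero]

variable [CompleteSpace 𝕜]

theorem summable_term (hq : ‖q‖ < 1) (z : 𝕜) : Summable (term q z) :=
  (summable_norm_term hq z).of_norm

theorem series_eq_one_add_mul (hq : ‖q‖ < 1) (w : 𝕜) :
    series q w = (1 + w) * series q (q * w) := by
  have hS : HasSum (term q (q * w)) (series q (q * w)) := (summable_term hq (q * w)).hasSum
  have htail : HasSum (fun k ↦ term q (q * w) (k + 1)) (series q (q * w) - 1) := by
    rw [hasSum_nat_add_iff 1]
    simpa [term_zero] using hS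
  have hshift : HasSum (fun k ↦ term q w (k + 1)) (series q (q * w) - 1 + w * series q (q * w)) := by
    rw [funext (term_succ_eq_add hq w)]
    exact htail.add (hS.mul_left w)
  rw [series, ((hasSum_nat_add_iff 1).mp hshift).tsum_eq]
  simp only [range_one, sum_singleton, term_zero]
  ring

theorem series_eq_prod_mul (hq : ‖q‖ < 1) (z : 𝕜) (N : ℕ) :
    series q z = (∏ n ∈ range N, (1 + z * q ^ n)) * series q (q ^ N * z) := by
  induction N with
  | zero => simp
  | succ N ih =>
    rw [ih, series_eq_one_add_mul hq (q ^ N * z), prod_range_succ, pow_succ', mul_assoc q]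
    ring

theorem tendsto_series_pow_mul (hq : ‖q‖ < 1) (z : 𝕜) :
    Tendsto (fun N ↦ series q (q ^ N * z)) atTop (𝓝 1) := by
  have hpow := tendsto_pow_atTop_nhds_zero_of_norm_lt_one hq
  have hterm (k : ℕ) :
      Tendsto (fun N ↦ term q (q ^ N * z) k) atTop (𝓝 (term q (0 * z) k)) := by
    simp_rw [term_mul_left]
    exact (hpow.pow k).mul_const _
  have hbound : ∀ᶠ N in atTop, ∀ k, ‖term q (q ^ N * z) k‖ ≤ ‖term q z k‖ :=
    Eventually.of_forall fun N k ↦ by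
      rw [term_mul_left, norm_mul, norm_pow, norm_pow]
      exact mul_le_of_le_one_left (norm_nonneg _)
        (pow_le_one₀ (by positivity) (pow_le_one₀ (norm_nonneg q) hq.le))
  have : Tendsto (fun N ↦ series q (q ^ N * z)) atTop (𝓝 (series q (0 * z))) :=
    tendsto_tsum_of_dominated_convergence (summable_norm_term hq z) hterm hbound
  rwa [zero_mul, series_zero] at this

theorem multipliable_one_add_mul_pow (hq : ‖q‖ < 1) (z : 𝕜) :
    Multipliable (fun n ↦ 1 + z * q ^ n) := by
  refine multipliable_one_add_of_summable ?_
  simpa only [norm_mul, norm_pow] using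
    (summable_geometric_of_lt_one (norm_nonneg q) hq).mul_left ‖z‖

end QExp

open QExp in
theorem q_exponential_E (z q : ℂ) (hq : ‖q‖ < 1) :
    (∑' k : ℕ, q ^ (k.choose 2) * z ^ k / (∏ j ∈ Finset.range k, (1 - q * q ^ j))) =
      ∏' n : ℕ, (1 + z * q ^ n) := by
  have hlim := (multipliable_one_add_mul_pow hq z).tendsto_prod_tprod_nat.mul
    (tendsto_series_pow_mul hq z)
  simp_rw [← series_eq_prod_mul hq z, mul_one] at hlim
  exact tendsto_nhds_unique tendsto_const_nhds hlim
end

section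
/- (Euler's theorem for the q-exponential e_q) For complex z, q with |q| < 1 and |z| < 1: ∑_{k=0}^∞ z^k / (q;q)_k = 1 / (z;q)_∞. -/
/-!
The series `e_q(w) = ∑ w^k / (q;q)_k` satisfies `e_q(w) (1 - w) = e_q(q w)`: termwise this is
`(q;q)_{k+1} = (q;q)_k (1 - q^{k+1})`. Iterating, `e_q(z) (z;q)_N = e_q(q^N z)`, and as `N → ∞`
the right side tends to `e_q(0) = 1` by dominated convergence: the terms are bounded by
`C ‖w‖^k` uniformly in `w`, since `‖(q;q)_k‖ ≥ (‖q‖;‖q‖)_∞ > 0`.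
-/

open Finset Filter Topology

variable {𝕜 : Type*} [NormedField 𝕜]

/-- The `q`-Pochhammer symbol `(a; q)_k`. -/
def qPochhammer (a q : 𝕜) (k : ℕ) : 𝕜 := ∏ j ∈ range k, (1 - a * q ^ j)

noncomputable def qExp (q w : 𝕜) : 𝕜 := ∑' k : ℕ, w ^ k / qPochhammer q q k

@[simp] lemma qPochhammer_zero (a q : 𝕜) : qPochhammer a q 0 = 1 := prod_range_zero _

lemma qPochhammer_succ (a q : 𝕜) (k : ℕ) :
    qPochhammer a q (k + 1) = qPochhammer a q k * (1 - a * q ^ k) := prod_range_succ _ _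

lemma norm_mul_pow_lt_one {a q : 𝕜} (ha : ‖a‖ < 1) (hq : ‖q‖ ≤ 1) (n : ℕ) :
    ‖a * q ^ n‖ < 1 := by
  rw [norm_mul, norm_pow]
  exact mul_lt_one_of_nonneg_of_lt_one_left (norm_nonneg a) ha (pow_le_one₀ (norm_nonneg q) hq)

lemma one_sub_mul_pow_ne_zero {a q : 𝕜} (ha : ‖a‖ < 1) (hq : ‖q‖ ≤ 1) (n : ℕ) :
    1 - a * q ^ n ≠ 0 := by
  rw [sub_ne_zero]
  intro h
  simpa [← h] using norm_mul_pow_lt_one ha hq n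

lemma summable_norm_mul_pow (a : 𝕜) {q : 𝕜} (hq : ‖q‖ < 1) :
    Summable fun n : ℕ ↦ ‖a * q ^ n‖ := by
  simpa [norm_mul, norm_pow] using
    (summable_geometric_of_lt_one (norm_nonneg q) hq).mul_left ‖a‖

lemma multipliable_one_sub_mul_pow [CompleteSpace 𝕜] (a : 𝕜) {q : 𝕜} (hq : ‖q‖ < 1) :
    Multipliable fun n : ℕ ↦ 1 - a * q ^ n := by
  simpa [sub_eq_add_neg] using
    multipliable_one_add_of_summable (f := fun n ↦ -(a * q ^ n))
      (by simpa using summable_norm_mul_pow a hq)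

lemma tprod_one_sub_mul_pow_ne_zero [CompleteSpace 𝕜] {a q : 𝕜} (ha : ‖a‖ < 1) (hq : ‖q‖ < 1) :
    ∏' n : ℕ, (1 - a * q ^ n) ≠ 0 := by
  simpa [sub_eq_add_neg] using
    tprod_one_add_ne_zero_of_summable (f := fun n : ℕ ↦ -(a * q ^ n))
      (fun n ↦ by simpa [sub_eq_add_neg] using one_sub_mul_pow_ne_zero ha hq.le n)
      (by simpa using summable_norm_mul_pow a hq)

lemma qPochhammer_norm_le_norm_qPochhammer {a q : 𝕜} (ha : ‖a‖ ≤ 1) (hq : ‖q‖ ≤ 1) (k : ℕ) :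
    qPochhammer ‖a‖ ‖q‖ k ≤ ‖qPochhammer a q k‖ := by
  rw [qPochhammer, qPochhammer, norm_prod]
  refine prod_le_prod (fun j _ ↦ ?_) (fun j _ ↦ ?_)
  · exact sub_nonneg.2 (mul_le_one₀ ha (by positivity) (pow_le_one₀ (norm_nonneg q) hq))
  · simpa using norm_sub_norm_le (1 : 𝕜) (a * q ^ j)

namespace Real

lemma one_sub_mul_pow_nonneg {a q : ℝ} (ha : a ≤ 1) (hq₀ : 0 ≤ q) (hq : q ≤ 1) (n : ℕ) :
    0 ≤ 1 - a * q ^ n :=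
  sub_nonneg.2 (mul_le_one₀ ha (pow_nonneg hq₀ n) (pow_le_one₀ hq₀ hq))

lemma antitone_qPochhammer {a q : ℝ} (ha₀ : 0 ≤ a) (ha : a ≤ 1) (hq₀ : 0 ≤ q) (hq : q ≤ 1) :
    Antitone (qPochhammer a q) := by
  refine antitone_nat_of_succ_le fun k ↦ ?_
  rw [qPochhammer_succ]
  exact mul_le_of_le_one_right (prod_nonneg fun j _ ↦ one_sub_mul_pow_nonneg ha hq₀ hq j)
    (sub_le_self _ (by positivity))

lemma tprod_one_sub_mul_pow_pos {a q : ℝ} (ha₀ : 0 ≤ a) (ha : a < 1) (hq₀ : 0 ≤ q) (hq : q < 1) :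
    0 < ∏' n : ℕ, (1 - a * q ^ n) := by
  have hq₁ : ‖q‖ < 1 := by rwa [norm_of_nonneg hq₀]
  refine (tprod_nonneg fun n ↦ ?_).lt_of_ne' (tprod_one_sub_mul_pow_ne_zero ?_ hq₁)
  · exact one_sub_mul_pow_nonneg ha.le hq₀ hq.le n
  · rwa [norm_of_nonneg ha₀]

lemma tprod_one_sub_mul_pow_le_qPochhammer {a q : ℝ} (ha₀ : 0 ≤ a) (ha : a < 1) (hq₀ : 0 ≤ q)
    (hq : q < 1) (k : ℕ) : ∏' n : ℕ, (1 - a * q ^ n) ≤ qPochhammer a q k :=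
  (antitone_qPochhammer ha₀ ha.le hq₀ hq.le).le_of_tendsto
    (multipliable_one_sub_mul_pow a (by rwa [norm_of_nonneg hq₀])).hasProd.tendsto_prod_nat k

end Real

lemma exists_pos_le_norm_qPochhammer {q : 𝕜} (hq : ‖q‖ < 1) :
    ∃ c > 0, ∀ k, c ≤ ‖qPochhammer q q k‖ :=
  ⟨_, Real.tprod_one_sub_mul_pow_pos (norm_nonneg q) hq (norm_nonneg q) hq, fun k ↦
    (Real.tprod_one_sub_mul_pow_le_qPochhammer (norm_nonneg q) hq (norm_nonneg q) hq k).trans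
      (qPochhammer_norm_le_norm_qPochhammer hq.le hq.le k)⟩

lemma exists_norm_pow_div_qPochhammer_le {q : 𝕜} (hq : ‖q‖ < 1) :
    ∃ C ≥ 0, ∀ w k, ‖w ^ k / qPochhammer q q k‖ ≤ C * ‖w‖ ^ k := by
  obtain ⟨c, hc, hle⟩ := exists_pos_le_norm_qPochhammer hq
  refine ⟨c⁻¹, inv_nonneg.2 hc.le, fun w k ↦ ?_⟩
  rw [norm_div, norm_pow, div_eq_inv_mul]
  exact mul_le_mul_of_nonneg_right (inv_anti₀ hc (hle k)) (by positivity)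

lemma qExp_zero (q : 𝕜) : qExp q 0 = 1 := by
  rw [qExp, tsum_eq_single 0 fun k hk ↦ by simp [hk]]
  simp

variable [CompleteSpace 𝕜]

lemma summable_pow_div_qPochhammer {q w : 𝕜} (hq : ‖q‖ < 1) (hw : ‖w‖ < 1) :
    Summable fun k ↦ w ^ k / qPochhammer q q k := by
  obtain ⟨C, -, hC⟩ := exists_norm_pow_div_qPochhammer_le hq
  exact .of_norm_bounded ((summable_geometric_of_lt_one (norm_nonneg w) hw).mul_left C) (hC w)

lemma qExp_mul_one_sub {q w : 𝕜} (hq : ‖q‖ < 1) (hw : ‖w‖ < 1) :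
    qExp q w * (1 - w) = qExp q (q * w) := by
  have hqw : ‖q * w‖ < 1 := by simpa [mul_comm] using norm_mul_pow_lt_one hw hq.le 1
  have hS := summable_pow_div_qPochhammer hq hw
  have hS' := summable_pow_div_qPochhammer hq hqw
  have hdiff : qExp q w - qExp q (q * w) = w * qExp q w := by
    rw [qExp, qExp, ← hS.tsum_sub hS', (hS.sub hS').tsum_eq_zero_add, ← tsum_mul_left]
    simp only [pow_zero, sub_self, zero_add]
    refine tsum_congr fun k ↦ ?_
    rw [qPochhammer_succ, div_sub_div_same,
      show w ^ (k + 1) - (q * w) ^ (k + 1) = w * w ^ k * (1 - q * q ^ k) by ring,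
      mul_div_mul_right _ _ (one_sub_mul_pow_ne_zero hq hq.le k), mul_div_assoc]
  linear_combination hdiff

lemma qExp_mul_qPochhammer {q z : 𝕜} (hq : ‖q‖ < 1) (hz : ‖z‖ < 1) (N : ℕ) :
    qExp q z * qPochhammer z q N = qExp q (q ^ N * z) := by
  induction N with
  | zero => simp
  | succ N ih =>
    rw [qPochhammer_succ, ← mul_assoc, ih, mul_comm z, qExp_mul_one_sub hq, ← mul_assoc,
      ← pow_succ']
    simpa [mul_comm] using norm_mul_pow_lt_one hz hq.le N

lemma tendsto_qExp_nhds_zero {q : 𝕜} (hq : ‖q‖ < 1) : Tendsto (qExp q) (𝓝 0) (𝓝 1) := by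
  obtain ⟨C, hC₀, hC⟩ := exists_norm_pow_div_qPochhammer_le hq
  rw [← qExp_zero q]
  refine tendsto_tsum_of_dominated_convergence
    ((summable_geometric_of_lt_one (by norm_num) (by norm_num : (1 / 2 : ℝ) < 1)).mul_left C)
    (fun k ↦ ((continuous_pow k).div_const _).tendsto 0) ?_
  filter_upwards [Metric.closedBall_mem_nhds (0 : 𝕜) (by norm_num : (0 : ℝ) < 1 / 2)] with w hw k
  refine (hC w k).trans (mul_le_mul_of_nonneg_left (pow_le_pow_left₀ (norm_nonneg w) ?_ k) hC₀)
  simpa using hw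

theorem q_exponential_e (z q : ℂ) (hq : ‖q‖ < 1) (hz : ‖z‖ < 1) :
    (∑' k : ℕ, z ^ k / (∏ j ∈ Finset.range k, (1 - q * q ^ j))) =
      1 / ∏' n : ℕ, (1 - z * q ^ n) := by
  have hpartial : Tendsto (fun N ↦ qExp q z * qPochhammer z q N) atTop (𝓝 1) := by
    simp_rw [qExp_mul_qPochhammer hq hz]
    refine (tendsto_qExp_nhds_zero hq).comp ?_
    simpa using (tendsto_pow_atTop_nhds_zero_of_norm_lt_one hq).mul_const z
  have hlimit : qExp q z * ∏' n : ℕ, (1 - z * q ^ n) = 1 :=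
    tendsto_nhds_unique
      (((multipliable_one_sub_mul_pow z hq).hasProd.tendsto_prod_nat).const_mul _) hpartial
  exact eq_one_div_of_mul_eq_one_left hlimit
end

section
/- (Reversed q-Chu–Vandermonde sum) For a nonnegative integer n, nonzero complex q not a root of unity, and nonzero complex a, b with (b;q)_n ≠ 0 and (b;q)_k ≠ 0 for 0 ≤ k ≤ n: ∑_{k=0}^{n} (q^{-n};q)_k (a;q)_k / [(q;q)_k (b;q)_k] · (q^n b / a)^k = (b/a; q)_n / (b;q)_n. -/
open Finset

noncomputable def qb (q : ℂ) : ℕ → ℕ → ℂ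
  | 0, 0 => 1
  | 0, _+1 => 0
  | _+1, 0 => 1
  | n+1, k+1 => qb q n (k+1) + q^(n-k) * qb q n k

lemma qb_zero (q : ℂ) : ∀ n k : ℕ, n < k → qb q n k = 0 := by
  intro n
  induction n with
  | zero => intro k hk; match k, hk with | k+1, _ => rfl
  | succ n ih =>
    intro k hk
    match k, hk with
    | k+1, hk =>
      show qb q n (k+1) + q^(n-k) * qb q n k = 0
      rw [ih _ (by omega), ih _ (by omega)]; ring

lemma qb_diag (q : ℂ) : ∀ n : ℕ, qb q n n = 1 := by
  intro n
  induction n with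
  | zero => rfl
  | succ n ih =>
    show qb q n (n+1) + q^(n-n) * qb q n n = 1
    rw [qb_zero q n (n+1) (by omega), ih]; simp

lemma qb_succ (q : ℂ) (n k : ℕ) :
    qb q (n+1) (k+1) = qb q n (k+1) + q^(n-k) * qb q n k := rfl

lemma qb_fac (q : ℂ) : ∀ n k : ℕ, k ≤ n →
    qb q n k * (∏ j ∈ range k, (1 - q * q ^ j)) * (∏ j ∈ range (n - k), (1 - q * q ^ j)) =
      ∏ j ∈ range n, (1 - q * q ^ j) := by
  intro n
  induction n with
  | zero => intro k hk; interval_cases k; simp [qb]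
  | succ n ih =>
    intro k hk
    match k with
    | 0 => show qb q (n+1) 0 * _ * _ = _; simp [qb]
    | k+1 =>
      rcases eq_or_lt_of_le hk with h | h
      · obtain rfl : k = n := by omega
        rw [qb_succ, qb_zero q _ _ (by omega), qb_diag]
        simp
      · obtain ⟨m, rfl⟩ : ∃ m, n = k + 1 + m := ⟨n - (k+1), by omega⟩
        rw [qb_succ]
        have h1 := ih (k+1) (by omega)
        have h2 := ih k (by omega)
        have e1 : k + 1 + m - (k + 1) = m := by omega
        have e2 : k + 1 + m - k = m + 1 := by omega
        have e3 : k + 1 + m + 1 - (k + 1) = m + 1 := by omega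
        rw [e1] at h1; rw [e2] at h2; rw [e2, e3]
        rw [prod_range_succ (fun j => 1 - q * q ^ j) (k+1+m)]
        rw [prod_range_succ (fun j => 1 - q * q ^ j) m] at h2 ⊢
        rw [prod_range_succ (fun j => 1 - q * q ^ j) k] at h1 ⊢
        linear_combination (1 - q * q ^ m) * h1 + q ^ (m+1) * (1 - q * q^k) * h2

noncomputable def T (q a c : ℂ) (n k : ℕ) : ℂ :=
  (-1)^k * q^(k.choose 2) * qb q n k * (∏ j ∈ range k, (1 - a * q^j)) * c^k *
    (∏ j ∈ range (n-k), (1 - a*c*q^(k+j)))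

noncomputable def U (q a c : ℂ) (n k : ℕ) : ℂ :=
  (-1)^k * q^(k.choose 2) * qb q n k * (∏ j ∈ range k, (1 - a * q^j)) * c^k *
    (∏ j ∈ range (n+1-k), (1 - a*c*q^(k+j)))

lemma qb_zero_right (q : ℂ) (n : ℕ) : qb q n 0 = 1 := by
  cases n <;> rfl

lemma choose_succ_two (k : ℕ) : (k+1).choose 2 = k.choose 2 + k := by
  rw [Nat.choose_succ_succ, Nat.choose_one_right, Nat.add_comm]

lemma L1 (q a c : ℂ) (n k : ℕ) (hk : k ≤ n) :
    T q a c (n+1) (k+1) = U q a c n (k+1) + (-((1-a)*c*q^n)) * T q (a*q) c n k := by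
  simp only [T, U, qb_succ]
  have e1 : n + 1 - (k+1) = n - k := by omega
  rw [e1]
  have e2 : ∏ j ∈ range (k+1), (1 - a * q^j)
      = (∏ j ∈ range k, (1 - a*q * q^j)) * (1 - a) := by
    rw [Finset.prod_range_succ']
    congr 1
    · exact Finset.prod_congr rfl fun j _ => by ring
    · norm_num
  have e3 : ∏ j ∈ range (n-k), (1 - a*c*q^((k+1)+j))
      = ∏ j ∈ range (n-k), (1 - (a*q)*c*q^(k+j)) := by
    refine Finset.prod_congr rfl fun j _ => ?_
    have : (k+1)+j = (k+j)+1 := by omega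
    rw [this]; ring
  rw [e2, e3, choose_succ_two, pow_add]
  have hnk : q^k * q^(n-k) = q^n := by rw [← pow_add]; congr 1; omega
  linear_combination ((-1:ℂ))^(k+1) * q^(k.choose 2) * qb q n k * (1-a) *
    (∏ j ∈ range k, (1 - a*q * q^j)) * c^(k+1) *
    (∏ j ∈ range (n-k), (1 - (a*q)*c*q^(k+j))) * hnk

lemma L2 (q a c : ℂ) (n k : ℕ) (hk : k ≤ n) :
    U q a c n k = (1 - a*c*q^n) * T q a c n k := by
  simp only [T, U]
  have e1 : n + 1 - k = (n-k)+1 := by omega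
  have e2 : k + (n-k) = n := by omega
  rw [e1, Finset.prod_range_succ, e2]
  ring

lemma key (q : ℂ) : ∀ (n : ℕ) (a c : ℂ),
    ∑ k ∈ range (n+1), T q a c n k = ∏ j ∈ range n, (1 - c * q^j) := by
  intro n
  induction n with
  | zero => intro a c; simp [T, qb]
  | succ n ih =>
    intro a c
    rw [Finset.sum_range_succ' (T q a c (n+1)) (n+1)]
    rw [Finset.sum_congr rfl (fun k hk => L1 q a c n k (Nat.lt_succ_iff.mp (mem_range.mp hk)))]
    rw [Finset.sum_add_distrib]
    have hT0 : T q a c (n+1) 0 = U q a c n 0 := by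
      simp only [T, U, qb, qb_zero_right]
    rw [hT0, add_right_comm, ← Finset.sum_range_succ' (U q a c n) (n+1)]
    rw [Finset.sum_range_succ (U q a c n) (n+1)]
    have hUtop : U q a c n (n+1) = 0 := by
      simp only [U, qb_zero q n (n+1) (by omega)]
      ring
    rw [hUtop, add_zero]
    rw [Finset.sum_congr rfl (fun k hk => L2 q a c n k (Nat.lt_succ_iff.mp (mem_range.mp hk)))]
    rw [← Finset.mul_sum, ← Finset.mul_sum, ih a c, ih (a*q) c, Finset.prod_range_succ]
    ring

lemma pq_ne (q : ℂ) (hroot : ∀ m : ℕ, 0 < m → q ^ m ≠ 1) (m : ℕ) :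
    (∏ j ∈ range m, (1 - q * q ^ j)) ≠ 0 := by
  refine Finset.prod_ne_zero_iff.mpr fun j _ => ?_
  intro h
  exact hroot (j+1) (Nat.succ_pos j) (by rw [pow_succ']; exact (sub_eq_zero.mp h).symm)

lemma claim1 (q : ℂ) (hq : q ≠ 0) (n k : ℕ) (hk : k ≤ n) :
    (∏ j ∈ range k, (1 - q ^ (-(n : ℤ)) * q ^ j)) * (q^n)^k =
      (-1)^k * q^(k.choose 2) * ∏ j ∈ range k, (1 - q^(n-j)) := by
  have hz : q ^ (-(n : ℤ)) * q^n = 1 := by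
    rw [← zpow_natCast q n, ← zpow_add₀ hq]
    simp
  have step : ∀ j ∈ range k, (1 - q ^ (-(n : ℤ)) * q ^ j) * q^n
      = -(q^j) * (1 - q^(n-j)) := by
    intro j hj
    have hj' : j ≤ n := le_trans (le_of_lt (mem_range.mp hj)) hk
    have h2 : q^j * q^(n-j) = q^n := by rw [← pow_add]; congr 1; omega
    linear_combination (-(q^j)) * hz - h2
  calc (∏ j ∈ range k, (1 - q ^ (-(n : ℤ)) * q ^ j)) * (q^n)^k
      = ∏ j ∈ range k, ((1 - q ^ (-(n : ℤ)) * q ^ j) * q^n) := by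
        rw [Finset.prod_mul_distrib, Finset.prod_const, Finset.card_range]
    _ = ∏ j ∈ range k, (-(q^j) * (1 - q^(n-j))) := Finset.prod_congr rfl step
    _ = (∏ j ∈ range k, -(q^j)) * ∏ j ∈ range k, (1 - q^(n-j)) := Finset.prod_mul_distrib
    _ = (-1)^k * q^(k.choose 2) * ∏ j ∈ range k, (1 - q^(n-j)) := by
        congr 1
        calc ∏ j ∈ range k, -(q^j) = (∏ j ∈ range k, (-1:ℂ)) * ∏ j ∈ range k, q^j := by
              rw [← Finset.prod_mul_distrib]; exact Finset.prod_congr rfl fun j _ => by ring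
          _ = (-1)^k * q^(k.choose 2) := by
              rw [Finset.prod_const, Finset.card_range, Finset.prod_pow_eq_pow_sum,
                Finset.sum_range_id, Nat.choose_two_right]

lemma claim2 (q : ℂ) (hroot : ∀ m : ℕ, 0 < m → q ^ m ≠ 1) (n k : ℕ) (hk : k ≤ n) :
    (∏ j ∈ range k, (1 - q^(n-j))) = qb q n k * ∏ j ∈ range k, (1 - q * q ^ j) := by
  obtain ⟨m, rfl⟩ : ∃ m, n = m + k := ⟨n - k, by omega⟩
  have hfac := qb_fac q (m+k) k (by omega)
  rw [show m + k - k = m from by omega] at hfac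
  have hrefl : ∏ j ∈ range k, (1 - q^(m+k-j)) = ∏ i ∈ range k, (1 - q*q^(m+i)) := by
    rw [← Finset.prod_range_reflect (fun i => 1 - q*q^(m+i)) k]
    refine Finset.prod_congr rfl fun j hj => ?_
    have hj' : j < k := mem_range.mp hj
    have : q * q^(m+(k-1-j)) = q^(m+k-j) := by rw [← pow_succ']; congr 1; omega
    rw [this]
  have hsplit : (∏ j ∈ range (m+k), (1 - q*q^j))
      = (∏ j ∈ range m, (1 - q*q^j)) * ∏ i ∈ range k, (1 - q*q^(m+i)) :=
    Finset.prod_range_add _ m k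
  apply mul_left_cancel₀ (pq_ne q hroot m)
  rw [hrefl, ← hsplit, ← hfac]
  ring

lemma termwise (a b q : ℂ) (hq : q ≠ 0)
    (hroot : ∀ m : ℕ, 0 < m → q ^ m ≠ 1) (ha : a ≠ 0) (hb : b ≠ 0) (n : ℕ)
    (hbn : (∏ j ∈ Finset.range n, (1 - b * q ^ j)) ≠ 0)
    (hbk : ∀ k ≤ n, (∏ j ∈ Finset.range k, (1 - b * q ^ j)) ≠ 0)
    (k : ℕ) (hk : k ≤ n) :
    (∏ j ∈ Finset.range k, (1 - q ^ (-(n : ℤ)) * q ^ j)) *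
      (∏ j ∈ Finset.range k, (1 - a * q ^ j)) /
      ((∏ j ∈ Finset.range k, (1 - q * q ^ j)) *
        (∏ j ∈ Finset.range k, (1 - b * q ^ j))) * (q ^ (n : ℤ) * b / a) ^ k =
    T q a (b/a) n k / (∏ j ∈ Finset.range n, (1 - b * q ^ j)) := by
  have key1 : (∏ j ∈ range k, (1 - q ^ (-(n : ℤ)) * q ^ j)) * (q^n)^k
      = (-1)^k * q^(k.choose 2) * (qb q n k * ∏ j ∈ range k, (1 - q * q ^ j)) := by
    rw [claim1 q hq n k hk, claim2 q hroot n k hk]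
  have claim3 : (∏ j ∈ Finset.range n, (1 - b * q ^ j))
      = (∏ j ∈ Finset.range k, (1 - b * q ^ j)) *
        ∏ j ∈ range (n-k), (1 - b * q ^ (k+j)) := by
    have h := Finset.prod_range_add (fun j => 1 - b * q ^ j) k (n-k)
    rw [show k + (n-k) = n from by omega] at h
    exact h
  have hQb : (∏ j ∈ range (n-k), (1 - b * q ^ (k+j))) ≠ 0 := by
    intro h0
    apply hbn
    rw [claim3, h0, mul_zero]
  have hPq : (∏ j ∈ range k, (1 - q * q ^ j)) ≠ 0 := pq_ne q hroot k
  have hPb : (∏ j ∈ range k, (1 - b * q ^ j)) ≠ 0 := hbk k hk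
  have hqnk : ((q:ℂ)^n)^k ≠ 0 := pow_ne_zero k (pow_ne_zero n hq)
  have hPneg : (∏ j ∈ range k, (1 - q ^ (-(n : ℤ)) * q ^ j))
      = ((-1)^k * q^(k.choose 2) * (qb q n k * ∏ j ∈ range k, (1 - q * q ^ j))) / (q^n)^k := by
    rw [eq_div_iff hqnk]; exact key1
  simp only [T]
  rw [zpow_natCast, show a * (b/a) = b from by field_simp, hPneg, claim3]
  field_simp
  ring

theorem q_chu_vandermonde_reversed (a b q : ℂ) (hq : q ≠ 0)
    (hroot : ∀ m : ℕ, 0 < m → q ^ m ≠ 1) (ha : a ≠ 0) (hb : b ≠ 0) (n : ℕ)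
    (hbn : (∏ j ∈ Finset.range n, (1 - b * q ^ j)) ≠ 0)
    (hbk : ∀ k ≤ n, (∏ j ∈ Finset.range k, (1 - b * q ^ j)) ≠ 0) :
    (∑ k ∈ Finset.range (n + 1),
        (∏ j ∈ Finset.range k, (1 - q ^ (-(n : ℤ)) * q ^ j)) *
          (∏ j ∈ Finset.range k, (1 - a * q ^ j)) /
          ((∏ j ∈ Finset.range k, (1 - q * q ^ j)) *
            (∏ j ∈ Finset.range k, (1 - b * q ^ j))) * (q ^ (n : ℤ) * b / a) ^ k) =
      (∏ j ∈ Finset.range n, (1 - (b / a) * q ^ j)) /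
        (∏ j ∈ Finset.range n, (1 - b * q ^ j)) := by
  rw [Finset.sum_congr rfl (fun k hk =>
    termwise a b q hq hroot ha hb n hbn hbk k (Nat.lt_succ_iff.mp (mem_range.mp hk)))]
  rw [← Finset.sum_div, key q n a (b/a)]
end

section
/- (Limit case of q-Chu–Vandermonde) For a nonnegative integer n, nonzero complex q not a root of unity, and complex a with (a;q)_k ≠ 0 for 0 ≤ k ≤ n: ∑_{k=0}^{n} (q^{-n};q)_k / [(q;q)_k (a;q)_k] · q^k = q^{C(n,2)} (−a)^n / (a;q)_n, where C(n,2) = n(n-1)/2. -/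
/-!
Write `S n` for the left-hand side. Comparing the terms of `S (m + 1)` (numerator parameter
`q⁻¹ x` with `x = q^{-m}`) with those of `S m` (parameter `x`), the difference
`(x - a) · term_{m+1}(k) + a · term_m(k)` telescopes: it equals `x (c_k - c_{k-1})`, where `c_k`
is the coefficient of `q^k` in `S m`. Summing, and using that `c_{m+1} = 0` because
`(q^{-m}; q)_{m+1}` contains the factor `1 - q^{-m} q^m`, gives
`(1 - a q^m) S (m + 1) = -a q^m S m`, from which the closed form follows by induction on `n`.
-/

open Finset

namespace QChuVandermonde

def qPoch (a q : ℂ) (k : ℕ) : ℂ := ∏ j ∈ range k, (1 - a * q ^ j)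

@[simp]
lemma qPoch_zero (a q : ℂ) : qPoch a q 0 = 1 := prod_range_zero _

lemma qPoch_succ (a q : ℂ) (k : ℕ) : qPoch a q (k + 1) = qPoch a q k * (1 - a * q ^ k) :=
  prod_range_succ _ _

lemma qPoch_succ' (a q : ℂ) (k : ℕ) : qPoch a q (k + 1) = (1 - a) * qPoch (a * q) q k := by
  simp only [qPoch, prod_range_succ', pow_succ, pow_zero, mul_one, mul_assoc, mul_comm]

lemma qPoch_self_ne_zero {q : ℂ} (hroot : ∀ m : ℕ, 0 < m → q ^ m ≠ 1) (k : ℕ) :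
    qPoch q q k ≠ 0 :=
  prod_ne_zero_iff.mpr fun j _ h =>
    hroot (j + 1) j.succ_pos (by rw [pow_succ']; exact (sub_eq_zero.mp h).symm)

lemma qPoch_inv_pow_eq_zero {q : ℂ} (hq : q ≠ 0) {m k : ℕ} (hmk : m < k) :
    qPoch (q ^ m)⁻¹ q k = 0 :=
  prod_eq_zero (mem_range.mpr hmk) (by rw [inv_mul_cancel₀ (pow_ne_zero m hq), sub_self])

/-- The coefficient of `q^k` in `₂φ₁(x, 0; a; q, q)`. -/
noncomputable def phiCoeff (x a q : ℂ) (k : ℕ) : ℂ :=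
  qPoch x q k / (qPoch q q k * qPoch a q k)

lemma phiCoeff_inv_pow_eq_zero {a q : ℂ} (hq : q ≠ 0) {m k : ℕ} (hmk : m < k) :
    phiCoeff (q ^ m)⁻¹ a q k = 0 := by
  rw [phiCoeff, qPoch_inv_pow_eq_zero hq hmk, zero_div]

lemma phiCoeff_contiguous_succ {x a q : ℂ} {N : ℕ} (hqq : qPoch q q (N + 1) ≠ 0)
    (ha : qPoch a q (N + 1) ≠ 0) :
    (x * q - a) * (phiCoeff x a q (N + 1) * q ^ (N + 1)) =
      -a * (phiCoeff (x * q) a q (N + 1) * q ^ (N + 1)) +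
        x * q * (phiCoeff (x * q) a q (N + 1) - phiCoeff (x * q) a q N) := by
  rw [qPoch_succ] at hqq ha
  obtain ⟨hqqN, hqN⟩ := mul_ne_zero_iff.mp hqq
  obtain ⟨haN, hN⟩ := mul_ne_zero_iff.mp ha
  simp only [phiCoeff, qPoch_succ' x, qPoch_succ (x * q), qPoch_succ q q N, qPoch_succ a q N]
  field_simp
  ring

lemma phiCoeff_contiguous {x a q : ℂ} {N : ℕ} (hqq : qPoch q q N ≠ 0)
    (ha : qPoch a q N ≠ 0) :
    (x * q - a) * ∑ k ∈ range (N + 1), phiCoeff x a q k * q ^ k =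
      -a * ∑ k ∈ range (N + 1), phiCoeff (x * q) a q k * q ^ k +
        x * q * phiCoeff (x * q) a q N := by
  induction N with
  | zero => simp only [zero_add, sum_range_one, phiCoeff, qPoch_zero, pow_zero]; ring
  | succ N ih =>
    have ih := ih (left_ne_zero_of_mul (qPoch_succ q q N ▸ hqq))
      (left_ne_zero_of_mul (qPoch_succ a q N ▸ ha))
    rw [sum_range_succ, sum_range_succ _ (N + 1)]
    linear_combination ih + phiCoeff_contiguous_succ hqq ha

lemma sum_phiCoeff_mul_qPoch {a q : ℂ} (hq : q ≠ 0) {n : ℕ} (hqq : qPoch q q n ≠ 0)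
    (ha : qPoch a q n ≠ 0) :
    (∑ k ∈ range (n + 1), phiCoeff (q ^ n)⁻¹ a q k * q ^ k) * qPoch a q n =
      q ^ n.choose 2 * (-a) ^ n := by
  induction n with
  | zero => simp [phiCoeff]
  | succ m ih =>
    have ih := ih (left_ne_zero_of_mul (qPoch_succ q q m ▸ hqq))
      (left_ne_zero_of_mul (qPoch_succ a q m ▸ ha))
    have hshift : (q ^ (m + 1))⁻¹ * q = (q ^ m)⁻¹ := by
      rw [pow_succ, mul_inv, inv_mul_cancel_right₀ hq]
    set S := ∑ k ∈ range (m + 1 + 1), phiCoeff (q ^ (m + 1))⁻¹ a q k * q ^ k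
    have hrel : ((q ^ m)⁻¹ - a) * S =
        -a * ∑ k ∈ range (m + 1), phiCoeff (q ^ m)⁻¹ a q k * q ^ k := by
      have h := phiCoeff_contiguous (x := (q ^ (m + 1))⁻¹) hqq ha
      rwa [hshift, sum_range_succ (fun k => phiCoeff (q ^ m)⁻¹ a q k * q ^ k) (m + 1),
        phiCoeff_inv_pow_eq_zero hq m.lt_succ_self, zero_mul, add_zero, mul_zero, add_zero] at h
    have hchoose : (m + 1).choose 2 = m + m.choose 2 := by
      rw [Nat.choose_succ_succ, Nat.choose_one_right]
    rw [qPoch_succ, hchoose, pow_add, pow_succ (-a)]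
    linear_combination (q ^ m * qPoch a q m) * hrel + (-a * q ^ m) * ih -
      (qPoch a q m * S) * mul_inv_cancel₀ (pow_ne_zero m hq)

end QChuVandermonde

open QChuVandermonde in
theorem q_chu_vandermonde_limit (a q : ℂ) (hq : q ≠ 0)
    (hroot : ∀ m : ℕ, 0 < m → q ^ m ≠ 1) (n : ℕ)
    (hak : ∀ k ≤ n, (∏ j ∈ Finset.range k, (1 - a * q ^ j)) ≠ 0) :
    (∑ k ∈ Finset.range (n + 1),
        (∏ j ∈ Finset.range k, (1 - q ^ (-(n : ℤ)) * q ^ j)) /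
          ((∏ j ∈ Finset.range k, (1 - q * q ^ j)) *
            (∏ j ∈ Finset.range k, (1 - a * q ^ j))) * q ^ k) =
      q ^ (n.choose 2) * (-a) ^ n / (∏ j ∈ Finset.range n, (1 - a * q ^ j)) := by
  change ∑ k ∈ range (n + 1), phiCoeff (q ^ (-(n : ℤ))) a q k * q ^ k =
    q ^ n.choose 2 * (-a) ^ n / qPoch a q n
  have ha : qPoch a q n ≠ 0 := hak n le_rfl
  rw [zpow_neg, zpow_natCast, eq_div_iff ha]
  exact sum_phiCoeff_mul_qPoch hq (qPoch_self_ne_zero hroot n) ha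
end
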